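/- Let 𝒱 be a finite set of conjunctive-query views. Every hierarchical conjunctive query that has some 𝒱-rewriting also has a hierarchical 𝒱-rewriting. -/

import Mathlib

/-- A relational atom (or fact): a relation symbol with a list of arguments.
Arguments are natural numbers, serving both as variables and as data values. -/
structure Atom where
  rel : ℕ
  args : List ℕ
deriving DecidableEq

/-- Apply a substitution to an atom. -/
def mapAtom (f : ℕ → ℕ) (A : Atom) : Atom := ⟨A.rel, A.args.map f⟩

/-- The variables of an atom. -/
def Atom.vars (A : Atom) : Finset ℕ := A.args.toFinset

/-- The variables of a finite set of atoms. -/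
def varsOf (B : Finset Atom) : Finset ℕ := B.biUnion Atom.vars

/-- A conjunctive query: a head atom and a finite set of body atoms. -/
structure CQ where
  head : Atom
  body : Finset Atom
deriving DecidableEq

/-- All variables of a conjunctive query. -/
def CQ.vars (Q : CQ) : Finset ℕ := Q.head.vars ∪ varsOf Q.body

/-- A schema: a set of relation symbols together with an arity function. -/
structure Schema where
  rels : Set ℕ
  ar : ℕ → ℕ

/-- An atom (or fact) over a schema. -/
def atomOver (σ : Schema) (A : Atom) : Prop :=
  A.rel ∈ σ.rels ∧ A.args.length = σ.ar A.rel

/-- `Q` is a (well-formed) conjunctive query over schema `σ`: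
nonempty body of σ-atoms, head relation symbol not in σ, and safety. -/
def isCQ (σ : Schema) (Q : CQ) : Prop :=
  Q.body.Nonempty ∧ (∀ A ∈ Q.body, atomOver σ A) ∧
  Q.head.rel ∉ σ.rels ∧ Q.head.vars ⊆ varsOf Q.body

/-- A database is a set of facts (finiteness is imposed where needed). -/
abbrev Database := Set Atom

/-- A database over a schema. -/
def isDBOver (σ : Schema) (D : Database) : Prop := ∀ F ∈ D, atomOver σ F

/-- The result of a conjunctive query on a database. -/
def evalCQ (Q : CQ) (D : Database) : Set Atom :=
  { F | ∃ ν : ℕ → ℕ, (∀ A ∈ Q.body, mapAtom ν A ∈ D) ∧ mapAtom ν Q.head = F }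

/-- Containment of conjunctive queries. -/
def containedCQ (Q1 Q2 : CQ) : Prop :=
  ∀ D : Database, D.Finite → evalCQ Q1 D ⊆ evalCQ Q2 D

/-- Equivalence of conjunctive queries. -/
def equivCQ (Q1 Q2 : CQ) : Prop :=
  ∀ D : Database, D.Finite → evalCQ Q1 D = evalCQ Q2 D

/-- A conjunctive query is minimal if no equivalent CQ has strictly fewer body atoms. -/
def isMinimal (Q : CQ) : Prop :=
  ∀ Q2 : CQ, equivCQ Q Q2 → Q.body.card ≤ Q2.body.card

/-- A homomorphism from `Q2` to `Q1`. -/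
def isHom (h : ℕ → ℕ) (Q2 Q1 : CQ) : Prop :=
  (∀ A ∈ Q2.body, mapAtom h A ∈ Q1.body) ∧ mapAtom h Q2.head = Q1.head

/-- A body homomorphism from `Q2` to `Q1`. -/
def isBodyHom (h : ℕ → ℕ) (Q2 Q1 : CQ) : Prop :=
  ∀ A ∈ Q2.body, mapAtom h A ∈ Q1.body

/-- A set of views over σ: each view is a CQ over σ and views have
pairwise distinct head relation symbols. -/
def isViewSet (σ : Schema) (𝒱 : Finset CQ) : Prop :=
  (∀ V ∈ 𝒱, isCQ σ V) ∧
  ∀ V ∈ 𝒱, ∀ W ∈ 𝒱, V ≠ W → V.head.rel ≠ W.head.rel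

/-- The 𝒱-defined database 𝒱(D). -/
def viewDB (𝒱 : Finset CQ) (D : Database) : Database :=
  ⋃ V ∈ 𝒱, evalCQ V D

/-- `Q'` is a CQ over the schema σ_𝒱 of the head relations of the views 𝒱. -/
def overViews (𝒱 : Finset CQ) (Q' : CQ) : Prop :=
  Q'.body.Nonempty ∧
  (∀ A ∈ Q'.body, ∃ V ∈ 𝒱, A.rel = V.head.rel ∧ A.args.length = V.head.args.length) ∧
  (∀ V ∈ 𝒱, Q'.head.rel ≠ V.head.rel) ∧
  Q'.head.vars ⊆ varsOf Q'.body

/-- `Q'` is a 𝒱-rewriting of `Q`: `Q'` is over σ_𝒱 and `Q'(𝒱(D)) = Q(D)`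
for every (finite) database `D` over σ. -/
def isRewriting (σ : Schema) (𝒱 : Finset CQ) (Q Q' : CQ) : Prop :=
  overViews 𝒱 Q' ∧
  ∀ D : Database, D.Finite → isDBOver σ D →
    evalCQ Q' (viewDB 𝒱 D) = evalCQ Q D

/-- `T` is a join tree for the atom set `B`. -/
def joinTreeProp (B : Finset Atom) (T : SimpleGraph {A : Atom // A ∈ B}) : Prop :=
  T.IsTree ∧
  ∀ (x : ℕ) (A A' : {A : Atom // A ∈ B}) (p : T.Walk A A'), p.IsPath →
    x ∈ A.1.vars → x ∈ A'.1.vars → ∀ C ∈ p.support, x ∈ C.1.vars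

/-- The atom set `B` has a join tree. -/
def hasJoinTree (B : Finset Atom) : Prop :=
  ∃ T : SimpleGraph {A : Atom // A ∈ B}, joinTreeProp B T

/-- A conjunctive query is acyclic if its body has a join tree. -/
def isAcyclicCQ (Q : CQ) : Prop := hasJoinTree Q.body

/-- A conjunctive query is free-connex acyclic. -/
def isFreeConnex (Q : CQ) : Prop :=
  isAcyclicCQ Q ∧ hasJoinTree (insert Q.head Q.body)

/-- The bridge variables of `𝒜 ⊆ body(Q)`. -/
def bvars (Q : CQ) (𝒜 : Finset Atom) : Finset ℕ :=
  varsOf 𝒜 ∩ (Q.head.vars ∪ varsOf (Q.body \ 𝒜))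

/-- An application of a view `V`: a substitution that does not unify any
quantified variable of `V` with another variable of `V`. -/
def isApplication (V : CQ) (α : ℕ → ℕ) : Prop :=
  ∀ x ∈ varsOf V.body, x ∉ V.head.vars →
    ∀ y ∈ CQ.vars V, y ≠ x → α x ≠ α y

/-- The query α(V). -/
def applyCQ (α : ℕ → ℕ) (V : CQ) : CQ :=
  ⟨mapAtom α V.head, V.body.image (mapAtom α)⟩

/-- `(𝒜, V, α, ψ)` is a cover description for `Q`. -/
def isCoverDesc (Q : CQ) (𝒜 : Finset Atom) (V : CQ) (α ψ : ℕ → ℕ) : Prop :=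
  𝒜 ⊆ Q.body ∧ isApplication V α ∧
  𝒜 ⊆ V.body.image (mapAtom α) ∧
  bvars Q 𝒜 ⊆ V.head.vars.image α ∧
  isBodyHom ψ (applyCQ α V) Q ∧
  ∀ x ∈ varsOf 𝒜, ψ x = x

/-- A cover partition for `Q` over `𝒱`: a collection of cover descriptions
whose atom sets partition `body(Q)`. -/
def isCoverPartition (Q : CQ) (𝒱 : Finset CQ) (m : ℕ)
    (𝒜 : Fin m → Finset Atom) (V : Fin m → CQ) (α ψ : Fin m → ℕ → ℕ) : Prop :=
  (∀ i, V i ∈ 𝒱 ∧ isCoverDesc Q (𝒜 i) (V i) (α i) (ψ i)) ∧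
  ∀ A ∈ Q.body, ∃! i, A ∈ 𝒜 i

/-- Consistency of a cover partition: a variable of any `α_j(V_j)` lies in the
range of another `α_i` only if it also lies in `bvars(𝒜_j)`. -/
def isConsistent (Q : CQ) (m : ℕ) (𝒜 : Fin m → Finset Atom) (V : Fin m → CQ)
    (α : Fin m → ℕ → ℕ) : Prop :=
  ∀ i j : Fin m, i ≠ j → ∀ z ∈ CQ.vars (applyCQ (α j) (V j)),
    (∃ x ∈ CQ.vars (V i), α i x = z) → z ∈ bvars Q (𝒜 j)

/-- The query `Q_𝒞` induced by a (consistent) cover partition. -/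
def inducedCQ (Q : CQ) (m : ℕ) (V : Fin m → CQ) (α : Fin m → ℕ → ℕ) : CQ :=
  ⟨Q.head, Finset.image (fun i => mapAtom (α i) (V i).head) Finset.univ⟩

/-- Quantified variable disjointness for a family of view applications. -/
def QVD (m : ℕ) (V : Fin m → CQ) (α : Fin m → ℕ → ℕ) : Prop :=
  ∀ i j : Fin m, i ≠ j → ∀ x ∈ varsOf (V i).body, x ∉ (V i).head.vars →
    ∀ y ∈ CQ.vars (V j), α i x ≠ α j y

/-- `QE` is an expansion of `Q'` with respect to the views `𝒱`. -/
def isExpansion (𝒱 : Finset CQ) (Q' QE : CQ) : Prop :=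
  ∃ (m : ℕ) (A' : Fin m → Atom) (V : Fin m → CQ) (α : Fin m → ℕ → ℕ),
    (∀ i, V i ∈ 𝒱 ∧ isApplication (V i) (α i) ∧ A' i = mapAtom (α i) (V i).head) ∧
    Q'.body = Finset.image A' Finset.univ ∧
    QVD m V α ∧
    QE.head = Q'.head ∧
    QE.body = Finset.biUnion Finset.univ (fun i => (V i).body.image (mapAtom (α i)))

/-- `atoms(x)`: the body atoms of `Q` containing the variable `x`. -/
def atomsWith (Q : CQ) (x : ℕ) : Finset Atom :=
  Q.body.filter (fun A => x ∈ A.vars)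

/-- Hierarchical conjunctive queries. -/
def isHierarchical (Q : CQ) : Prop :=
  ∀ x y : ℕ, atomsWith Q x ⊆ atomsWith Q y ∨ atomsWith Q y ⊆ atomsWith Q x ∨
    atomsWith Q x ∩ atomsWith Q y = ∅

/-- q-hierarchical conjunctive queries. -/
def isQHierarchical (Q : CQ) : Prop :=
  isHierarchical Q ∧ ∀ x y : ℕ, atomsWith Q x ⊂ atomsWith Q y →
    x ∈ Q.head.vars → y ∈ Q.head.vars

/-- `P` is a partition of `body(Q)` witnessing weak head arity at most `k`. -/
def witnessesWHA (Q : CQ) (k n : ℕ) (P : Fin n → Finset Atom) : Prop :=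
  (∀ i, (P i).Nonempty) ∧ (∀ i, P i ⊆ Q.body) ∧ (∀ A ∈ Q.body, ∃! i, A ∈ P i) ∧
  (∀ i, (varsOf (P i) ∩ Q.head.vars).card ≤ k) ∧
  (∀ i j, i ≠ j → ∀ x ∈ varsOf (P i), x ∈ varsOf (P j) → x ∈ Q.head.vars)

/-- `Q` has weak head arity at most `k`. -/
def hasWHAle (Q : CQ) (k : ℕ) : Prop := ∃ n P, witnessesWHA Q k n P

/-- The weak head arity of `Q`. -/
noncomputable def weakHeadArity (Q : CQ) : ℕ := sInf {k | hasWHAle Q k}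

/-- The cover graph of `Q`: vertices are the body atoms, with an edge between
two atoms iff they share a variable not occurring in the head. -/
def coverGraph (Q : CQ) : SimpleGraph {A : Atom // A ∈ Q.body} :=
  SimpleGraph.fromRel (fun A B => ∃ x, x ∈ A.1.vars ∧ x ∈ B.1.vars ∧ x ∉ Q.head.vars)

/-- A subset `s` of the atom set `B` is connected in the (join) tree `T`. -/
def connectedIn (B : Finset Atom) (T : SimpleGraph {A : Atom // A ∈ B}) (s : Finset Atom) : Prop :=
  (T.induce {A : {A : Atom // A ∈ B} | A.1 ∈ s}).Connected


/-! ### Auxiliary material for the proof of Statement 8 -/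

section Statement8Aux

attribute [local instance] Classical.propDecidable

instance : Encodable Atom :=
  Encodable.ofEquiv (ℕ × List ℕ) ⟨fun A => (A.rel, A.args), fun p => ⟨p.1, p.2⟩,
    fun _ => rfl, fun _ => rfl⟩

lemma mapAtom_id (A : Atom) : mapAtom id A = A := by simp [mapAtom]

lemma mapAtom_comp (f g : ℕ → ℕ) (A : Atom) : mapAtom f (mapAtom g A) = mapAtom (f ∘ g) A := by
  simp [mapAtom]

lemma mapAtom_congr {f g : ℕ → ℕ} {A : Atom} (h : ∀ x ∈ A.vars, f x = g x) :
    mapAtom f A = mapAtom g A := by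
  unfold mapAtom; congr 1
  exact List.map_congr_left (fun a ha => h a (List.mem_toFinset.mpr ha))

lemma mapAtom_eq_pointwise {f g : ℕ → ℕ} {A : Atom} (h : mapAtom f A = mapAtom g A) :
    ∀ x ∈ A.vars, f x = g x := by
  intro x hx
  have h2 : A.args.map f = A.args.map g := congrArg Atom.args h
  exact List.map_inj_left.mp h2 x (List.mem_toFinset.mp hx)

lemma mem_vars_mapAtom {z : ℕ} {f : ℕ → ℕ} {A : Atom} :
    z ∈ (mapAtom f A).vars ↔ ∃ x ∈ A.vars, f x = z := by
  simp [mapAtom, Atom.vars, List.mem_toFinset]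

lemma vars_sub_varsOf {A : Atom} {B : Finset Atom} (h : A ∈ B) : A.vars ⊆ varsOf B :=
  fun x hx => Finset.mem_biUnion.mpr ⟨A, h, hx⟩

lemma mem_varsOf {x : ℕ} {B : Finset Atom} : x ∈ varsOf B ↔ ∃ A ∈ B, x ∈ A.vars :=
  Finset.mem_biUnion

lemma mem_viewDB {𝒱 : Finset CQ} {D : Database} {F : Atom} :
    F ∈ viewDB 𝒱 D ↔ ∃ V ∈ 𝒱, F ∈ evalCQ V D := by
  simp [viewDB]

lemma list_map_injOn {f : ℕ → ℕ} : ∀ {l l' : List ℕ}, l.map f = l'.map f →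
    (∀ x ∈ l, ∀ y ∈ l', f x = f y → x = y) → l = l' := by
  intro l
  induction l with
  | nil => intro l' h _; cases l' with
    | nil => rfl
    | cons a t => simp at h
  | cons a t ih =>
    intro l' h hinj
    cases l' with
    | nil => simp at h
    | cons a' t' =>
      simp only [List.map_cons, List.cons.injEq] at h
      have ha : a = a' := hinj a (by simp) a' (by simp) h.1
      have ht : t = t' := ih h.2 (fun x hx y hy => hinj x (by simp [hx]) y (by simp [hy]))
      rw [ha, ht]

/-- The key lemma: Statement 8 for "minimal" queries. -/
theorem key_min (σ : Schema) (𝒱 : Finset CQ) (h𝒱 : isViewSet σ 𝒱)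
    (Q : CQ) (hQ : isCQ σ Q) (hH : isHierarchical Q)
    (hfresh0 : ∀ V ∈ 𝒱, Q.head.rel ≠ V.head.rel)
    (hmin : ∀ η : ℕ → ℕ, (∀ C ∈ Q.body, mapAtom η C ∈ Q.body) →
      (∀ x ∈ Q.head.vars, η x = x) → Set.InjOn η ↑(varsOf Q.body))
    (Q' : CQ) (hrw : isRewriting σ 𝒱 Q Q') :
    ∃ Q2, isRewriting σ 𝒱 Q Q2 ∧ isHierarchical Q2 := by
  classical
  obtain ⟨hne, hover, hheadrel, hsafe⟩ := hQ
  set W : Finset ℕ := CQ.vars Q with hWdef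
  have hWbody : varsOf Q.body ⊆ W := Finset.subset_union_right
  have hWhead : Q.head.vars ⊆ W := Finset.subset_union_left
  -- Step A: evaluate the rewriting on the canonical database of Q
  have hDQfin : (↑Q.body : Database).Finite := Q.body.finite_toSet
  have hDQover : isDBOver σ (↑Q.body : Database) := fun F hF => hover F hF
  have hhd : Q.head ∈ evalCQ Q' (viewDB 𝒱 ↑Q.body) := by
    rw [hrw.2 _ hDQfin hDQover]
    exact ⟨id, fun A hA => by simpa [mapAtom_id] using hA, mapAtom_id _⟩
  obtain ⟨μ, hμb, hμh⟩ := hhd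
  -- Step B: witnesses for the view facts on the canonical database
  have hwitE : ∀ A : Atom, ∃ (V : CQ) (ρ : ℕ → ℕ), A ∈ Q'.body →
      V ∈ 𝒱 ∧ (∀ b ∈ V.body, mapAtom ρ b ∈ Q.body) ∧ mapAtom ρ V.head = mapAtom μ A := by
    intro A
    by_cases hA : A ∈ Q'.body
    · have h1 := hμb A hA
      rw [mem_viewDB] at h1
      obtain ⟨V, hV, ρ, hρb, hρh⟩ := h1
      exact ⟨V, ρ, fun _ => ⟨hV, fun b hb => hρb b hb, hρh⟩⟩
    · exact ⟨Q', id, fun h => absurd h hA⟩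
  choose Vw Rho hwit using hwitE
  have hVwCQ : ∀ A ∈ Q'.body, isCQ σ (Vw A) := fun A hA => h𝒱.1 _ (hwit A hA).1
  have hheadsubV : ∀ A ∈ Q'.body, (Vw A).head.vars ⊆ varsOf (Vw A).body :=
    fun A hA => (hVwCQ A hA).2.2.2
  have hRhoW : ∀ A ∈ Q'.body, ∀ v, v ∈ varsOf (Vw A).body → Rho A v ∈ varsOf Q.body := by
    intro A hA v hv
    obtain ⟨b, hb, hvb⟩ := mem_varsOf.mp hv
    have h1 : mapAtom (Rho A) b ∈ Q.body := (hwit A hA).2.1 b hb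
    exact mem_varsOf.mpr ⟨_, h1, mem_vars_mapAtom.mpr ⟨v, hvb, rfl⟩⟩
  -- Step C: fresh encodings
  set N : ℕ := W.sup id with hNdef
  have hleN : ∀ x ∈ W, x ≤ N := fun x hx => Finset.le_sup (f := id) hx
  have hbodyleN : ∀ x ∈ varsOf Q.body, x ≤ N := fun x hx => hleN x (hWbody hx)
  set fr : Atom → ℕ → ℕ := fun A v => N + 1 + Encodable.encode (A, v) with hfrdef
  have hfr_gt : ∀ A v, N < fr A v := by intro A v; simp only [hfrdef]; omega
  have hfr_inj : ∀ {A v A' v'}, fr A v = fr A' v' → A = A' ∧ v = v' := by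
    intro A v A' v' h
    simp only [hfrdef] at h
    have h2 : Encodable.encode (A, v) = Encodable.encode (A', v') := by omega
    have h3 := Encodable.encode_injective h2
    exact ⟨congrArg Prod.fst h3, congrArg Prod.snd h3⟩
  set rhat : Atom → ℕ → ℕ :=
    (fun A v => if v ∈ (Vw A).head.vars then Rho A v else fr A v) with hrhatdef
  set cc : ℕ → ℕ := (fun z => if z ≤ N then z else
      (match (Encodable.decode (z - (N+1)) : Option (Atom × ℕ)) with
       | some p => Rho p.1 p.2 | none => z)) with hccdef
  have hcc_le : ∀ x, x ≤ N → cc x = x := by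
    intro x hx; simp only [hccdef]; rw [if_pos hx]
  have hcc_fr : ∀ A v, cc (fr A v) = Rho A v := by
    intro A v
    have h1 : ¬ (fr A v ≤ N) := not_le.mpr (hfr_gt A v)
    have h2 : fr A v - (N+1) = Encodable.encode (A, v) := by simp only [hfrdef]; omega
    simp only [hccdef]
    rw [if_neg h1, h2, Encodable.encodek]
  -- Step D: the expansion database
  set DE : Database := ⋃ A ∈ Q'.body, ↑((Vw A).body.image (mapAtom (rhat A))) with hDEdef
  have hDEfin : DE.Finite :=
    Set.Finite.biUnion Q'.body.finite_toSet (fun A _ => Finset.finite_toSet _)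
  have hDEmem : ∀ {F : Atom}, F ∈ DE ↔
      ∃ A ∈ Q'.body, ∃ b ∈ (Vw A).body, mapAtom (rhat A) b = F := by
    intro F; simp [hDEdef]
  have hDEover : isDBOver σ DE := by
    intro F hF
    obtain ⟨A, hA, b, hb, heq⟩ := hDEmem.mp hF
    have hbover := (hVwCQ A hA).2.1 b hb
    refine ⟨?_, ?_⟩
    · rw [← heq]; exact hbover.1
    · rw [← heq]; show (b.args.map (rhat A)).length = σ.ar b.rel
      rw [List.length_map]; exact hbover.2
  have hμDE : Q.head ∈ evalCQ Q' (viewDB 𝒱 DE) := by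
    refine ⟨μ, fun A hA => ?_, hμh⟩
    rw [mem_viewDB]
    refine ⟨Vw A, (hwit A hA).1, rhat A, fun b hb => ?_, ?_⟩
    · exact hDEmem.mpr ⟨A, hA, b, hb, rfl⟩
    · have h1 : mapAtom (rhat A) (Vw A).head = mapAtom (Rho A) (Vw A).head := by
        refine mapAtom_congr (fun v hv => ?_)
        simp only [hrhatdef]; rw [if_pos hv]
      rw [h1]; exact (hwit A hA).2.2
  have hhd2 : Q.head ∈ evalCQ Q DE := by rw [← hrw.2 DE hDEfin hDEover]; exact hμDE
  obtain ⟨ν₀, hν₀b, hν₀h⟩ := hhd2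
  have hν₀H : ∀ x ∈ Q.head.vars, ν₀ x = x := by
    have h1 : mapAtom ν₀ Q.head = mapAtom id Q.head := by rw [mapAtom_id]; exact hν₀h
    intro x hx
    simpa using mapAtom_eq_pointwise h1 x hx
  -- Step E: parts
  have hpartE : ∀ C : Atom, ∃ (A b : Atom), C ∈ Q.body →
      A ∈ Q'.body ∧ b ∈ (Vw A).body ∧ mapAtom (rhat A) b = mapAtom ν₀ C := by
    intro C
    by_cases hC : C ∈ Q.body
    · obtain ⟨A, hA, b, hb, heq⟩ := hDEmem.mp (hν₀b C hC)
      exact ⟨A, b, fun _ => ⟨hA, hb, heq⟩⟩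
    · exact ⟨C, C, fun h => absurd h hC⟩
  choose part bOf hpart using hpartE
  -- Step F: the endomorphism η and its inverse
  set η : ℕ → ℕ := cc ∘ ν₀ with hηdef
  have hηkey : ∀ C ∈ Q.body, mapAtom η C = mapAtom (Rho (part C)) (bOf C) := by
    intro C hC
    obtain ⟨hA, hb, heq⟩ := hpart C hC
    have e1 : mapAtom η C = mapAtom cc (mapAtom ν₀ C) := (mapAtom_comp _ _ _).symm
    rw [e1, ← heq, mapAtom_comp]
    refine mapAtom_congr (fun v hv => ?_)
    show cc (rhat (part C) v) = Rho (part C) v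
    have hvbody : v ∈ varsOf (Vw (part C)).body := vars_sub_varsOf hb hv
    by_cases hvh : v ∈ (Vw (part C)).head.vars
    · have h1 : rhat (part C) v = Rho (part C) v := by simp only [hrhatdef]; rw [if_pos hvh]
      rw [h1]
      exact hcc_le _ (hbodyleN _ (hRhoW _ hA v hvbody))
    · have h1 : rhat (part C) v = fr (part C) v := by simp only [hrhatdef]; rw [if_neg hvh]
      rw [h1]; exact hcc_fr _ _
  have hηb : ∀ C ∈ Q.body, mapAtom η C ∈ Q.body := by
    intro C hC
    rw [hηkey C hC]
    exact (hwit _ (hpart C hC).1).2.1 _ (hpart C hC).2.1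
  have hηH : ∀ x ∈ Q.head.vars, η x = x := by
    intro x hx
    show cc (ν₀ x) = x
    rw [hν₀H x hx]; exact hcc_le x (hleN x (hWhead hx))
  have hηinj : Set.InjOn η ↑(varsOf Q.body) := hmin η hηb hηH
  have hmapinj : Set.InjOn (mapAtom η) ↑Q.body := by
    intro C hC C' hC' hEq
    have hC2 : C ∈ Q.body := hC
    have hC'2 : C' ∈ Q.body := hC'
    have hrel0 := congrArg Atom.rel hEq
    have hargs0 := congrArg Atom.args hEq
    simp only [mapAtom] at hrel0 hargs0
    have hrel : C.rel = C'.rel := hrel0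
    have hargs : C.args.map η = C'.args.map η := hargs0
    have hargseq : C.args = C'.args := by
      refine list_map_injOn hargs (fun x hx y hy hxy => ?_)
      exact hηinj (vars_sub_varsOf hC2 (List.mem_toFinset.mpr hx))
        (vars_sub_varsOf hC'2 (List.mem_toFinset.mpr hy)) hxy
    cases C; cases C'
    simp only [Atom.mk.injEq]
    exact ⟨hrel, hargseq⟩
  have himage : Q.body.image (mapAtom η) = Q.body := by
    apply Finset.eq_of_subset_of_card_le (Finset.image_subset_iff.mpr hηb)
    rw [Finset.card_image_iff.mpr hmapinj]
  have hsurj : ∀ C ∈ Q.body, ∃ C₀, C₀ ∈ Q.body ∧ mapAtom η C₀ = C := by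
    intro C hC
    rw [← himage] at hC
    obtain ⟨C₀, h1, h2⟩ := Finset.mem_image.mp hC
    exact ⟨C₀, h1, h2⟩
  set ebar : ℕ → ℕ := Function.invFunOn η ↑(varsOf Q.body) with hebardef
  have hebar : ∀ x ∈ varsOf Q.body, ebar (η x) = x := fun x hx =>
    hηinj.leftInvOn_invFunOn hx
  have hebarC : ∀ C ∈ Q.body, mapAtom ebar (mapAtom η C) = C := by
    intro C hC
    rw [mapAtom_comp]
    have h1 : mapAtom (ebar ∘ η) C = mapAtom id C :=
      mapAtom_congr (fun x hx => hebar x (vars_sub_varsOf hC hx))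
    rw [h1, mapAtom_id]
  have hebarb : ∀ C ∈ Q.body, mapAtom ebar C ∈ Q.body := by
    intro C hC
    obtain ⟨C₀, hC₀, hC₀eq⟩ := hsurj C hC
    rw [← hC₀eq, hebarC C₀ hC₀]; exact hC₀
  -- Step G: the pulled-back cover maps
  set rho : Atom → ℕ → ℕ := (fun C => ebar ∘ Rho (part C)) with hrhodef
  have hrho_part : ∀ C C', part C = part C' → rho C = rho C' := by
    intro C C' h; simp only [hrhodef, h]
  have hcover : ∀ C ∈ Q.body, mapAtom (rho C) (bOf C) = C := by
    intro C hC
    have e1 : mapAtom (rho C) (bOf C) = mapAtom ebar (mapAtom (Rho (part C)) (bOf C)) := by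
      rw [mapAtom_comp]
    rw [e1, ← hηkey C hC, hebarC C hC]
  have hinto : ∀ C ∈ Q.body, ∀ b ∈ (Vw (part C)).body, mapAtom (rho C) b ∈ Q.body := by
    intro C hC b hb
    have h1 : mapAtom (Rho (part C)) b ∈ Q.body := (hwit _ (hpart C hC).1).2.1 b hb
    have h2 := hebarb _ h1
    rwa [mapAtom_comp] at h2
  have hF1 : ∀ C ∈ Q.body, ∀ v ∈ (bOf C).vars, ν₀ (rho C v) = rhat (part C) v := by
    intro C hC v hv
    have h1 : mapAtom (ν₀ ∘ rho C) (bOf C) = mapAtom (rhat (part C)) (bOf C) := by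
      rw [← mapAtom_comp, hcover C hC]
      exact ((hpart C hC).2.2).symm
    exact mapAtom_eq_pointwise h1 v hv
  have hrho_app : ∀ C v, rho C v = ebar (Rho (part C) v) := by
    intro C v; simp only [hrhodef]; rfl
  -- Step H: classes, exposed variables, blocks
  set UA : Atom → Finset ℕ :=
    (fun A => (Q.body.filter (fun C' => part C' = A)).biUnion (fun C' => (bOf C').vars))
    with hUAdef
  set GEA : Atom → Finset ℕ :=
    (fun A => ((Vw A).head.vars ∩ UA A).image (fun v => ebar (Rho A v))) with hGEAdef
  have hUA_mem : ∀ {A : Atom} {v : ℕ}, v ∈ UA A ↔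
      ∃ C', C' ∈ Q.body ∧ part C' = A ∧ v ∈ (bOf C').vars := by
    intro A v
    simp only [hUAdef, Finset.mem_biUnion, Finset.mem_filter]
    constructor
    · rintro ⟨C', ⟨h1, h2⟩, h3⟩; exact ⟨C', h1, h2, h3⟩
    · rintro ⟨C', h1, h2, h3⟩; exact ⟨C', ⟨h1, h2⟩, h3⟩
  have hGEA_mem : ∀ {A : Atom} {x : ℕ}, x ∈ GEA A ↔
      ∃ v, v ∈ (Vw A).head.vars ∧ v ∈ UA A ∧ ebar (Rho A v) = x := by
    intro A x
    simp only [hGEAdef, Finset.mem_image, Finset.mem_inter]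
    constructor
    · rintro ⟨v, ⟨h1, h2⟩, h3⟩; exact ⟨v, h1, h2, h3⟩
    · rintro ⟨v, h1, h2, h3⟩; exact ⟨v, ⟨h1, h2⟩, h3⟩
  set Adj : Atom → Atom → Prop := (fun C₁ C₂ => C₁ ∈ Q.body ∧ C₂ ∈ Q.body ∧
      part C₁ = part C₂ ∧ ∃ q, q ∈ C₁.vars ∧ q ∈ C₂.vars ∧ q ∉ GEA (part C₁)) with hAdjdef
  have hAdj_elim : ∀ {C₁ C₂}, Adj C₁ C₂ → C₁ ∈ Q.body ∧ C₂ ∈ Q.body ∧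
      part C₁ = part C₂ ∧ ∃ q, q ∈ C₁.vars ∧ q ∈ C₂.vars ∧ q ∉ GEA (part C₁) := by
    intro C₁ C₂ h; rw [hAdjdef] at h; exact h
  have hAdj_intro : ∀ {C₁ C₂}, C₁ ∈ Q.body → C₂ ∈ Q.body → part C₁ = part C₂ →
      ∀ q, q ∈ C₁.vars → q ∈ C₂.vars → q ∉ GEA (part C₁) → Adj C₁ C₂ := by
    intro C₁ C₂ h1 h2 h3 q h4 h5 h6; rw [hAdjdef]; exact ⟨h1, h2, h3, q, h4, h5, h6⟩
  have hAdjsymm : Symmetric Adj := by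
    intro C₁ C₂ h
    obtain ⟨h1, h2, h3, q, hq1, hq2, hq3⟩ := hAdj_elim h
    refine hAdj_intro h2 h1 h3.symm q hq2 hq1 ?_
    rw [← h3]; exact hq3
  have hRTGsymm : Symmetric (Relation.ReflTransGen Adj) := fun a b h => by
    induction h with
    | refl => exact Relation.ReflTransGen.refl
    | tail _ hbc ih => exact Relation.ReflTransGen.head (hAdjsymm hbc) ih
  set blk : Atom → Finset Atom :=
    (fun C => Q.body.filter (fun C' => part C' = part C ∧ Relation.ReflTransGen Adj C C'))
    with hblkdef
  have hblk_mem : ∀ {C C' : Atom}, C' ∈ blk C ↔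
      C' ∈ Q.body ∧ part C' = part C ∧ Relation.ReflTransGen Adj C C' := by
    intro C C'
    simp only [hblkdef, Finset.mem_filter, and_assoc]
  have hblk_self : ∀ C ∈ Q.body, C ∈ blk C := fun C hC =>
    hblk_mem.mpr ⟨hC, rfl, Relation.ReflTransGen.refl⟩
  have hblk_sub : ∀ C, blk C ⊆ Q.body := by
    intro C; rw [hblkdef]; exact Finset.filter_subset _ _
  have hblk_eq : ∀ C, ∀ C', C' ∈ blk C → blk C' = blk C := by
    intro C C' hC'
    obtain ⟨hC'b, hpeq, hrtg⟩ := hblk_mem.mp hC'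
    ext C''
    rw [hblk_mem, hblk_mem]
    constructor
    · rintro ⟨h1, h2, h3⟩
      exact ⟨h1, h2.trans hpeq, hrtg.trans h3⟩
    · rintro ⟨h1, h2, h3⟩
      exact ⟨h1, h2.trans hpeq.symm, Relation.ReflTransGen.trans (hRTGsymm hrtg) h3⟩
  -- bridge variables of the block of C
  set Br : Atom → Finset ℕ :=
    (fun C => varsOf (blk C) ∩ (Q.head.vars ∪ varsOf (Q.body \ blk C))) with hBrdef
  have hBr_blk : ∀ C C', blk C = blk C' → Br C = Br C' := by
    intro C C' h; simp only [hBrdef, h]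
  have hBr_mem : ∀ {C : Atom} {x : ℕ}, x ∈ Br C ↔
      x ∈ varsOf (blk C) ∧ (x ∈ Q.head.vars ∨ x ∈ varsOf (Q.body \ blk C)) := by
    intro C x
    simp only [hBrdef, Finset.mem_inter, Finset.mem_union]
  -- Step I: the exposure lemma
  have h7 : ∀ C ∈ Q.body, ∀ C' ∈ blk C, ∀ v ∈ (bOf C').vars,
      rho C v ∈ Br C → v ∈ (Vw (part C)).head.vars := by
    intro C hC C' hC' v hv hxBr
    by_contra hvh
    obtain ⟨hC'b, hpeq, hrtg⟩ := hblk_mem.mp hC'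
    have hrr : rho C' = rho C := hrho_part C' C hpeq
    have hAmem : part C' ∈ Q'.body := (hpart C' hC'b).1
    have hF1x : ν₀ (rho C v) = rhat (part C') v := by
      rw [← hrr]; exact hF1 C' hC'b v hv
    have hfrx : ν₀ (rho C v) = fr (part C') v := by
      rw [hF1x]
      simp only [hrhatdef]
      rw [if_neg]
      intro hcon
      rw [hpeq] at hcon
      exact hvh hcon
    have hfrgt := hfr_gt (part C') v
    rcases (hBr_mem.mp hxBr).2 with hxH | hxout
    · have hxle : rho C v ≤ N := hleN _ (hWhead hxH)
      rw [hν₀H _ hxH] at hfrx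
      omega
    · obtain ⟨C₃, hC₃mem, hxC₃⟩ := mem_varsOf.mp hxout
      have hC₃b : C₃ ∈ Q.body := (Finset.mem_sdiff.mp hC₃mem).1
      have hC₃nb : C₃ ∉ blk C := (Finset.mem_sdiff.mp hC₃mem).2
      by_cases hp3 : part C₃ = part C'
      · -- same class, so an `Adj` edge: contradiction with C₃ ∉ blk C
        have hxGE : rho C v ∉ GEA (part C') := by
          intro hxGE
          obtain ⟨w, hwh, hwU, hweq⟩ := hGEA_mem.mp hxGE
          obtain ⟨C₄, hC₄b, hC₄p, hwb⟩ := hUA_mem.mp hwU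
          have hF1w : ν₀ (rho C₄ w) = rhat (part C₄) w := hF1 C₄ hC₄b w hwb
          have hw4 : rho C₄ w = rho C v := by
            rw [hrho_app, hC₄p, hweq]
          have hwhead : w ∈ (Vw (part C₄)).head.vars := by rw [hC₄p]; exact hwh
          have hrhatw : rhat (part C₄) w = Rho (part C₄) w := by
            simp only [hrhatdef]; rw [if_pos hwhead]
          have hwle : Rho (part C₄) w ≤ N := by
            apply hbodyleN
            apply hRhoW _ ((hpart C₄ hC₄b).1)
            exact vars_sub_varsOf (hpart C₄ hC₄b).2.1 hwb
          rw [hw4, hfrx, hrhatw] at hF1w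
          omega
        have hxC' : rho C v ∈ C'.vars := by
          rw [← hcover C' hC'b]
          exact mem_vars_mapAtom.mpr ⟨v, hv, by rw [hrr]⟩
        have hAdj : Adj C' C₃ := by
          refine hAdj_intro hC'b hC₃b (hp3.symm) _ hxC' hxC₃ ?_
          exact hxGE
        have : C₃ ∈ blk C :=
          hblk_mem.mpr ⟨hC₃b, hp3.trans hpeq, hrtg.tail hAdj⟩
        exact hC₃nb this
      · -- different class: impossible since the fresh value is private
        have hC₃A : part C₃ ∈ Q'.body := (hpart C₃ hC₃b).1
        have h1 : mapAtom (rhat (part C₃)) (bOf C₃) = mapAtom ν₀ C₃ := (hpart C₃ hC₃b).2.2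
        have h2 : ν₀ (rho C v) ∈ (mapAtom (rhat (part C₃)) (bOf C₃)).vars := by
          rw [h1]; exact mem_vars_mapAtom.mpr ⟨rho C v, hxC₃, rfl⟩
        obtain ⟨w, hwb, hweq⟩ := mem_vars_mapAtom.mp h2
        rw [hfrx] at hweq
        by_cases hwh : w ∈ (Vw (part C₃)).head.vars
        · have hr : rhat (part C₃) w = Rho (part C₃) w := by
            simp only [hrhatdef]; rw [if_pos hwh]
          have hwle : Rho (part C₃) w ≤ N := by
            apply hbodyleN
            apply hRhoW _ hC₃A
            exact vars_sub_varsOf (hpart C₃ hC₃b).2.1 hwb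
          rw [hr] at hweq
          omega
        · have hr : rhat (part C₃) w = fr (part C₃) w := by
            simp only [hrhatdef]; rw [if_neg hwh]
          rw [hr] at hweq
          exact hp3 (hfr_inj hweq).1
  -- Br is contained in the exposed variables
  have hBrGE : ∀ C ∈ Q.body, ∀ x ∈ Br C,
      ∃ v, v ∈ (Vw (part C)).head.vars ∧ rho C v = x ∧ x ∈ GEA (part C) := by
    intro C hC x hx
    obtain ⟨C', hC', hxC'⟩ := mem_varsOf.mp (hBr_mem.mp hx).1
    have hC'b := hblk_sub C hC'
    have hpeq : part C' = part C := (hblk_mem.mp hC').2.1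
    have hxC'2 : x ∈ (mapAtom (rho C') (bOf C')).vars := by rw [hcover C' hC'b]; exact hxC'
    obtain ⟨v, hv, hveq⟩ := mem_vars_mapAtom.mp hxC'2
    have hveq2 : rho C v = x := by rw [← hrho_part C' C hpeq]; exact hveq
    have hvh := h7 C hC C' hC' v hv (by rw [hveq2]; exact hx)
    refine ⟨v, hvh, hveq2, ?_⟩
    refine hGEA_mem.mpr ⟨v, hvh, hUA_mem.mpr ⟨C', hC'b, hpeq, hv⟩, ?_⟩
    rw [← hrho_app]; exact hveq2
  -- Step J: the rewritten query
  set frB : Finset Atom → ℕ → ℕ := (fun b x => N + 1 + Encodable.encode (b, x)) with hfrBdef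
  have hfrB_gt : ∀ b x, N < frB b x := by intro b x; simp only [hfrBdef]; omega
  have hfrB_notW : ∀ b x, frB b x ∉ W := fun b x h =>
    absurd (hleN _ h) (not_le.mpr (hfrB_gt b x))
  have hfrB_inj : ∀ {b x b' x'}, frB b x = frB b' x' → b = b' ∧ x = x' := by
    intro b x b' x' h
    simp only [hfrBdef] at h
    have h2 : Encodable.encode (b, x) = Encodable.encode (b', x') := by omega
    have h3 := Encodable.encode_injective h2
    exact ⟨congrArg Prod.fst h3, congrArg Prod.snd h3⟩
  set theta : Atom → ℕ → ℕ :=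
    (fun C v => if rho C v ∈ Br C then rho C v else frB (blk C) (rho C v)) with hthetadef
  set gd : Atom → Atom := (fun C => mapAtom (theta C) (Vw (part C)).head) with hgddef
  have hpart_blk : ∀ C, ∀ C' ∈ blk C, part C' = part C := fun C C' h => (hblk_mem.mp h).2.1
  have htheta_blk : ∀ C, ∀ C' ∈ blk C, theta C' = theta C := by
    intro C C' hC'
    have h1 : blk C' = blk C := hblk_eq C C' hC'
    have h2 : rho C' = rho C := hrho_part _ _ (hpart_blk C C' hC')
    have h3 : Br C' = Br C := hBr_blk _ _ h1
    simp only [hthetadef, h1, h2, h3]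
  have hgd_blk : ∀ C, ∀ C' ∈ blk C, gd C' = gd C := by
    intro C C' hC'
    simp only [hgddef, htheta_blk C C' hC', hpart_blk C C' hC']
  set Q2 : CQ := ⟨Q.head, Q.body.image gd⟩ with hQ2def
  have hQ2body : Q2.body = Q.body.image gd := by rw [hQ2def]
  have hQ2head : Q2.head = Q.head := by rw [hQ2def]
  have hBrW : ∀ C, ∀ x ∈ Br C, x ∈ W := by
    intro C x hx
    obtain ⟨C'', hC'', hxC''⟩ := mem_varsOf.mp (hBr_mem.mp hx).1
    exact hWbody (mem_varsOf.mpr ⟨C'', hblk_sub C hC'', hxC''⟩)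
  have hVC : ∀ C, ∀ z ∈ (gd C).vars,
      (z ∈ Br C ∧ z ∈ W) ∨ (z ∉ W ∧ ∃ x, z = frB (blk C) x) := by
    intro C z hz
    rw [hgddef] at hz
    obtain ⟨v, hv, hveq⟩ := mem_vars_mapAtom.mp hz
    by_cases hB : rho C v ∈ Br C
    · left
      have ht : theta C v = rho C v := by simp only [hthetadef]; rw [if_pos hB]
      rw [← hveq, ht]
      exact ⟨hB, hBrW C _ hB⟩
    · right
      have ht : theta C v = frB (blk C) (rho C v) := by simp only [hthetadef]; rw [if_neg hB]
      rw [← hveq, ht]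
      exact ⟨hfrB_notW _ _, _, rfl⟩
  have hBr_gd : ∀ C ∈ Q.body, ∀ x ∈ Br C, x ∈ (gd C).vars := by
    intro C hC x hx
    obtain ⟨v, hvh, hveq, _⟩ := hBrGE C hC x hx
    have ht : theta C v = x := by
      simp only [hthetadef]
      rw [hveq, if_pos hx]
    rw [hgddef]
    exact mem_vars_mapAtom.mpr ⟨v, hvh, ht⟩
  -- Goal 1: Q2 is over the view schema
  have hG1 : overViews 𝒱 Q2 := by
    refine ⟨?_, ?_, ?_, ?_⟩
    · rw [hQ2body]; exact hne.image gd
    · intro A hA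
      rw [hQ2body] at hA
      obtain ⟨C, hC, hCeq⟩ := Finset.mem_image.mp hA
      refine ⟨Vw (part C), (hwit _ (hpart C hC).1).1, ?_, ?_⟩
      · rw [← hCeq, hgddef]; rfl
      · rw [← hCeq, hgddef]
        exact List.length_map _
    · intro V hV; rw [hQ2head]; exact hfresh0 V hV
    · intro x hx
      rw [hQ2head] at hx
      obtain ⟨C, hC, hxC⟩ := mem_varsOf.mp (hsafe hx)
      have hxBr : x ∈ Br C := hBr_mem.mpr
        ⟨mem_varsOf.mpr ⟨C, hblk_self C hC, hxC⟩, Or.inl hx⟩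
      rw [hQ2body]
      exact mem_varsOf.mpr ⟨gd C, Finset.mem_image_of_mem gd hC, hBr_gd C hC x hxBr⟩
  -- Goal 2: Q2 is a correct rewriting
  have hG2 : ∀ D : Database, evalCQ Q2 (viewDB 𝒱 D) = evalCQ Q D := by
    intro D
    ext f
    constructor
    · -- hard direction
      intro hf
      obtain ⟨μ', hμ'b, hμ'h⟩ := hf
      set tau' : CQ → Atom → ℕ → ℕ := (fun V g =>
        if h : ∃ t : ℕ → ℕ, (∀ b ∈ V.body, mapAtom t b ∈ D) ∧
            mapAtom t V.head = mapAtom μ' g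
        then h.choose else id) with htau'def
      have htau0 : ∀ C ∈ Q.body,
          (∀ b ∈ (Vw (part C)).body, mapAtom (tau' (Vw (part C)) (gd C)) b ∈ D) ∧
          mapAtom (tau' (Vw (part C)) (gd C)) (Vw (part C)).head = mapAtom μ' (gd C) := by
        intro C hC
        have hgdmem : gd C ∈ Q2.body := by
          rw [hQ2body]; exact Finset.mem_image_of_mem gd hC
        have h1 := hμ'b _ hgdmem
        rw [mem_viewDB] at h1
        obtain ⟨V₁, hV₁, t, htb, hth⟩ := h1
        have hrel : V₁.head.rel = (Vw (part C)).head.rel := by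
          have e1 : (mapAtom t V₁.head).rel = V₁.head.rel := rfl
          have e2 : (mapAtom μ' (gd C)).rel = (Vw (part C)).head.rel := by
            rw [hgddef]; rfl
          rw [← e1, hth, e2]
        have hVeq : V₁ = Vw (part C) := by
          by_contra hneq
          exact (h𝒱.2 V₁ hV₁ (Vw (part C)) (hwit _ (hpart C hC).1).1 hneq) hrel
        rw [hVeq] at htb hth
        have hex : ∃ t : ℕ → ℕ, (∀ b ∈ (Vw (part C)).body, mapAtom t b ∈ D) ∧
            mapAtom t (Vw (part C)).head = mapAtom μ' (gd C) := ⟨t, htb, hth⟩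
        simp only [htau'def]
        rw [dif_pos hex]
        exact hex.choose_spec
      set tau : Atom → ℕ → ℕ := (fun C => tau' (Vw (part C)) (gd C)) with htaudef
      have htau : ∀ C ∈ Q.body,
          (∀ b ∈ (Vw (part C)).body, mapAtom (tau C) b ∈ D) ∧
          mapAtom (tau C) (Vw (part C)).head = mapAtom μ' (gd C) := by
        intro C hC
        simp only [htaudef]
        exact htau0 C hC
      have htau_blk : ∀ C, ∀ C' ∈ blk C, tau C' = tau C := by
        intro C C' hC'
        simp only [htaudef, hpart_blk C C' hC', hgd_blk C C' hC']
      have hpin : ∀ C ∈ Q.body, ∀ v ∈ (Vw (part C)).head.vars,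
          tau C v = μ' (theta C v) := by
        intro C hC v hv
        have h2 : mapAtom (tau C) (Vw (part C)).head
            = mapAtom (μ' ∘ theta C) (Vw (part C)).head := by
          rw [(htau C hC).2, hgddef, mapAtom_comp]
        exact mapAtom_eq_pointwise h2 v hv
      set P : ℕ → Prop := (fun x => ∃ C, C ∈ Q.body ∧ x ∈ C.vars ∧ x ∉ Br C) with hPdef
      have hchoice : ∀ x : ℕ, ∃ y : ℕ,
          (P x → ∃ C₀ v₀, C₀ ∈ Q.body ∧ x ∈ C₀.vars ∧ x ∉ Br C₀ ∧ v₀ ∈ (bOf C₀).vars ∧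
            rho C₀ v₀ = x ∧ y = tau C₀ v₀) ∧ (¬ P x → y = μ' x) := by
        intro x
        by_cases hP : P x
        · have hP' := hP
          rw [hPdef] at hP'
          obtain ⟨C₀, hC₀, hxC₀, hxBr₀⟩ := hP'
          have hx2 : x ∈ (mapAtom (rho C₀) (bOf C₀)).vars := by
            rw [hcover C₀ hC₀]; exact hxC₀
          obtain ⟨v₀, hv₀, hv₀eq⟩ := mem_vars_mapAtom.mp hx2
          exact ⟨tau C₀ v₀, fun _ => ⟨C₀, v₀, hC₀, hxC₀, hxBr₀, hv₀, hv₀eq, rfl⟩,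
            fun h => absurd hP h⟩
        · exact ⟨μ' x, fun h => absurd h hP, fun _ => rfl⟩
      choose ν₁ hν₁ using hchoice
      have hsameblk : ∀ C ∈ Q.body, ∀ C₀ ∈ Q.body, ∀ x, x ∈ C.vars → x ∈ C₀.vars →
          x ∉ Br C₀ → blk C = blk C₀ := by
        intro C hC C₀ hC₀ x hxC hxC₀ hxBr
        by_cases hmem : C ∈ blk C₀
        · exact hblk_eq C₀ C hmem
        · exfalso
          apply hxBr
          refine hBr_mem.mpr ⟨mem_varsOf.mpr ⟨C₀, hblk_self C₀ hC₀, hxC₀⟩, Or.inr ?_⟩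
          exact mem_varsOf.mpr ⟨C, Finset.mem_sdiff.mpr ⟨hC, hmem⟩, hxC⟩
      have hmain : ∀ C ∈ Q.body, ∀ v ∈ (bOf C).vars, ν₁ (rho C v) = tau C v := by
        intro C hC v hv
        have hxC : rho C v ∈ C.vars := by
          have h0 : rho C v ∈ (mapAtom (rho C) (bOf C)).vars :=
            mem_vars_mapAtom.mpr ⟨v, hv, rfl⟩
          rwa [hcover C hC] at h0
        by_cases hB : rho C v ∈ Br C
        · have hnP : ¬ P (rho C v) := by
            rw [hPdef]
            rintro ⟨C₀, hC₀, hxC₀, hxBr₀⟩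
            have hbe := hsameblk C hC C₀ hC₀ _ hxC hxC₀ hxBr₀
            rw [hBr_blk C C₀ hbe] at hB
            exact hxBr₀ hB
          rw [(hν₁ _).2 hnP]
          have hvhead := h7 C hC C (hblk_self C hC) v hv hB
          rw [hpin C hC v hvhead]
          have ht : theta C v = rho C v := by simp only [hthetadef]; rw [if_pos hB]
          rw [ht]
        · have hP : P (rho C v) := by rw [hPdef]; exact ⟨C, hC, hxC, hB⟩
          obtain ⟨C₀, v₀, hC₀, hxC₀, hxBr₀, hv₀, hv₀eq, hyeq⟩ := (hν₁ _).1 hP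
          rw [hyeq]
          have hbe : blk C = blk C₀ := hsameblk C hC C₀ hC₀ _ hxC hxC₀ hxBr₀
          have hC₀blk : C₀ ∈ blk C := by rw [hbe]; exact hblk_self C₀ hC₀
          have htaueq : tau C₀ = tau C := htau_blk C C₀ hC₀blk
          have hrhoeq : rho C₀ = rho C := hrho_part C₀ C (hpart_blk C C₀ hC₀blk)
          rw [htaueq]
          have hA : part C ∈ Q'.body := (hpart C hC).1
          have hfib1 : ν₀ (rho C v) = rhat (part C) v := hF1 C hC v hv
          have hfib2 : ν₀ (rho C v) = rhat (part C) v₀ := by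
            calc ν₀ (rho C v) = ν₀ (rho C₀ v₀) := (congrArg ν₀ hv₀eq).symm
              _ = rhat (part C₀) v₀ := hF1 C₀ hC₀ v₀ hv₀
              _ = rhat (part C) v₀ := by rw [hpart_blk C C₀ hC₀blk]
          have hfib : rhat (part C) v = rhat (part C) v₀ := by rw [← hfib1, hfib2]
          have hre : rho C v₀ = rho C v := by rw [← hv₀eq, hrhoeq]
          by_cases hvh : v ∈ (Vw (part C)).head.vars
          · by_cases hv₀h : v₀ ∈ (Vw (part C)).head.vars
            · rw [hpin C hC v hvh, hpin C hC v₀ hv₀h]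
              have htheq : theta C v₀ = theta C v := by
                simp only [hthetadef]
                rw [hre]
              rw [htheq]
            · exfalso
              have e1 : rhat (part C) v = Rho (part C) v := by
                simp only [hrhatdef]; rw [if_pos hvh]
              have e2 : rhat (part C) v₀ = fr (part C) v₀ := by
                simp only [hrhatdef]; rw [if_neg hv₀h]
              have hle : Rho (part C) v ≤ N :=
                hbodyleN _ (hRhoW _ hA v (hheadsubV _ hA hvh))
              have hgt := hfr_gt (part C) v₀
              rw [e1, e2] at hfib
              omega
          · by_cases hv₀h : v₀ ∈ (Vw (part C)).head.vars
            · exfalso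
              have e1 : rhat (part C) v = fr (part C) v := by
                simp only [hrhatdef]; rw [if_neg hvh]
              have e2 : rhat (part C) v₀ = Rho (part C) v₀ := by
                simp only [hrhatdef]; rw [if_pos hv₀h]
              have hle : Rho (part C) v₀ ≤ N :=
                hbodyleN _ (hRhoW _ hA v₀ (hheadsubV _ hA hv₀h))
              have hgt := hfr_gt (part C) v
              rw [e1, e2] at hfib
              omega
            · have e1 : rhat (part C) v = fr (part C) v := by
                simp only [hrhatdef]; rw [if_neg hvh]
              have e2 : rhat (part C) v₀ = fr (part C) v₀ := by
                simp only [hrhatdef]; rw [if_neg hv₀h]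
              rw [e1, e2] at hfib
              rw [show v₀ = v from ((hfr_inj hfib).2).symm]
      refine ⟨ν₁, ?_, ?_⟩
      · intro C hC
        have heqat : mapAtom ν₁ C = mapAtom (tau C) (bOf C) := by
          conv_lhs => rw [← hcover C hC]
          rw [mapAtom_comp]
          exact mapAtom_congr (fun v hv => hmain C hC v hv)
        rw [heqat]
        exact (htau C hC).1 _ (hpart C hC).2.1
      · have h1 : mapAtom ν₁ Q.head = mapAtom μ' Q.head := by
          refine mapAtom_congr (fun x hx => ?_)
          have hnP : ¬ P x := by
            rw [hPdef]
            rintro ⟨C₀, hC₀, hxC₀, hxBr₀⟩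
            apply hxBr₀
            exact hBr_mem.mpr ⟨mem_varsOf.mpr ⟨C₀, hblk_self C₀ hC₀, hxC₀⟩, Or.inl hx⟩
          exact (hν₁ x).2 hnP
        rw [hQ2head] at hμ'h
        rw [h1]
        exact hμ'h
    · -- easy direction
      rintro ⟨ν, hνb, hνh⟩
      set μ2 : ℕ → ℕ := (fun z =>
        if h : ∃ p : Finset Atom × ℕ, z = frB p.1 p.2 then ν h.choose.2 else ν z) with hμ2def
      have hμ2W : ∀ z ∈ W, μ2 z = ν z := by
        intro z hz
        have hno : ¬ ∃ p : Finset Atom × ℕ, z = frB p.1 p.2 := by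
          rintro ⟨p, rfl⟩; exact hfrB_notW p.1 p.2 hz
        simp only [hμ2def]; rw [dif_neg hno]
      have hμ2fr : ∀ b x, μ2 (frB b x) = ν x := by
        intro b x
        have hex : ∃ p : Finset Atom × ℕ, frB b x = frB p.1 p.2 := ⟨(b, x), rfl⟩
        simp only [hμ2def]
        rw [dif_pos hex]
        exact congrArg ν (hfrB_inj hex.choose_spec.symm).2
      refine ⟨μ2, ?_, ?_⟩
      · intro A hA
        rw [hQ2body] at hA
        obtain ⟨C, hC, hCeq⟩ := Finset.mem_image.mp hA
        have key : mapAtom μ2 (gd C) = mapAtom (fun v => ν (rho C v)) (Vw (part C)).head := by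
          rw [hgddef, mapAtom_comp]
          refine mapAtom_congr (fun v _ => ?_)
          show μ2 (theta C v) = ν (rho C v)
          by_cases hB : rho C v ∈ Br C
          · have ht : theta C v = rho C v := by simp only [hthetadef]; rw [if_pos hB]
            rw [ht]; exact hμ2W _ (hBrW C _ hB)
          · have ht : theta C v = frB (blk C) (rho C v) := by
              simp only [hthetadef]; rw [if_neg hB]
            rw [ht]; exact hμ2fr _ _
        rw [← hCeq, mem_viewDB]
        refine ⟨Vw (part C), (hwit _ (hpart C hC).1).1,
          (fun v => ν (rho C v)), fun b hb => ?_, key.symm⟩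
        have h1 : mapAtom (rho C) b ∈ Q.body := hinto C hC b hb
        have h2 := hνb _ h1
        rw [mapAtom_comp] at h2
        exact h2
      · rw [hQ2head]
        have h1 : mapAtom μ2 Q.head = mapAtom ν Q.head :=
          mapAtom_congr (fun x hx => hμ2W x (hWhead hx))
        rw [h1]; exact hνh
  -- Goal 3: Q2 is hierarchical
  have hG3 : isHierarchical Q2 := by
    set bblk : ℕ → Finset Atom := (fun x => Q.body.filter (fun C => x ∈ Br C)) with hbblkdef
    have hbblk_mem : ∀ {x : ℕ} {C : Atom}, C ∈ bblk x ↔ C ∈ Q.body ∧ x ∈ Br C := by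
      intro x C; simp only [hbblkdef, Finset.mem_filter]
    have hatoms_mem : ∀ {x : ℕ} {g : Atom}, g ∈ atomsWith Q2 x ↔ g ∈ Q2.body ∧ x ∈ g.vars := by
      intro x g; simp only [atomsWith, Finset.mem_filter]
    have htrans : ∀ x y, x ∈ W → bblk x ⊆ bblk y → atomsWith Q2 x ⊆ atomsWith Q2 y := by
      intro x y hxW hsub g hg
      obtain ⟨hgb, hxg⟩ := hatoms_mem.mp hg
      rw [hQ2body] at hgb
      obtain ⟨C₁, hC₁, rfl⟩ := Finset.mem_image.mp hgb
      have hxBr : x ∈ Br C₁ := by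
        rcases hVC C₁ x hxg with h | h
        · exact h.1
        · exact absurd hxW h.1
      have hyBr : y ∈ Br C₁ := (hbblk_mem.mp (hsub (hbblk_mem.mpr ⟨hC₁, hxBr⟩))).2
      refine hatoms_mem.mpr ⟨?_, hBr_gd C₁ hC₁ y hyBr⟩
      rw [hQ2body]; exact Finset.mem_image_of_mem gd hC₁
    have hfreshcase : ∀ x, x ∉ W → ∀ g g', g ∈ atomsWith Q2 x → g' ∈ atomsWith Q2 x →
        g = g' := by
      intro x hxW g g' hg hg'
      obtain ⟨hgb, hxg⟩ := hatoms_mem.mp hg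
      obtain ⟨hgb', hxg'⟩ := hatoms_mem.mp hg'
      rw [hQ2body] at hgb hgb'
      obtain ⟨C₁, hC₁, rfl⟩ := Finset.mem_image.mp hgb
      obtain ⟨C₂, hC₂, rfl⟩ := Finset.mem_image.mp hgb'
      obtain ⟨x₁, hx₁⟩ := ((hVC C₁ x hxg).resolve_left (fun h => hxW h.2)).2
      obtain ⟨x₂, hx₂⟩ := ((hVC C₂ x hxg').resolve_left (fun h => hxW h.2)).2
      have hbeq : blk C₁ = blk C₂ := (hfrB_inj (hx₁.symm.trans hx₂)).1
      have hC₂mem : C₂ ∈ blk C₁ := by rw [hbeq]; exact hblk_self C₂ hC₂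
      exact (hgd_blk C₁ C₂ hC₂mem).symm
    have hLmono : ∀ (C₀ : Atom), C₀ ∈ Q.body → ∀ a b, atomsWith Q a ⊆ atomsWith Q b →
        b ∈ Br C₀ → bblk a ⊆ bblk b := by
      intro C₀ hC₀ a b hab hbBr C₅ hC₅
      obtain ⟨hC₅b, haBr⟩ := hbblk_mem.mp hC₅
      obtain ⟨C₆, hC₆, haC₆⟩ := mem_varsOf.mp (hBr_mem.mp haBr).1
      have hC₆b : C₆ ∈ Q.body := hblk_sub C₅ hC₆
      have hbC₆ : b ∈ C₆.vars :=
        (Finset.mem_filter.mp (hab (Finset.mem_filter.mpr ⟨hC₆b, haC₆⟩))).2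
      refine hbblk_mem.mpr ⟨hC₅b, hBr_mem.mpr ⟨mem_varsOf.mpr ⟨C₆, hC₆, hbC₆⟩, ?_⟩⟩
      rcases (hBr_mem.mp hbBr).2 with hbH | hbout
      · exact Or.inl hbH
      · obtain ⟨C₇, hC₇mem, hbC₇⟩ := mem_varsOf.mp hbout
        have hC₇b : C₇ ∈ Q.body := (Finset.mem_sdiff.mp hC₇mem).1
        have hC₇n : C₇ ∉ blk C₀ := (Finset.mem_sdiff.mp hC₇mem).2
        obtain ⟨C₈, hC₈, hbC₈⟩ := mem_varsOf.mp (hBr_mem.mp hbBr).1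
        have hC₈b : C₈ ∈ Q.body := hblk_sub C₀ hC₈
        by_cases h7in : C₇ ∈ blk C₅
        · by_cases h8in : C₈ ∈ blk C₅
          · exfalso
            have e1 : blk C₈ = blk C₅ := hblk_eq C₅ C₈ h8in
            have e2 : blk C₈ = blk C₀ := hblk_eq C₀ C₈ hC₈
            apply hC₇n
            rw [← e2, e1]
            exact h7in
          · exact Or.inr (mem_varsOf.mpr ⟨C₈, Finset.mem_sdiff.mpr ⟨hC₈b, h8in⟩, hbC₈⟩)
        · exact Or.inr (mem_varsOf.mpr ⟨C₇, Finset.mem_sdiff.mpr ⟨hC₇b, h7in⟩, hbC₇⟩)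
    have hL : ∀ (C₀ : Atom), C₀ ∈ Q.body → ∀ y, y ∈ Br C₀ →
        ∀ Cy, Cy ∈ blk C₀ → y ∈ Cy.vars →
        ∀ Cx, Relation.ReflTransGen Adj Cx Cy → Cx ∈ blk C₀ →
        ∀ x, x ∈ Cx.vars → x ∈ Br C₀ →
        (bblk x ⊆ bblk y ∨ bblk y ⊆ bblk x) := by
      intro C₀ hC₀ y hy Cy hCy hyv Cx hpath
      induction hpath using Relation.ReflTransGen.head_induction_on with
      | refl =>
        intro _ x hxv hxB
        have hCyb : Cy ∈ Q.body := hblk_sub C₀ hCy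
        rcases hH x y with hc | hc | hc
        · exact Or.inl (hLmono C₀ hC₀ x y hc hy)
        · exact Or.inr (hLmono C₀ hC₀ y x hc hxB)
        · exfalso
          have hmm : Cy ∈ atomsWith Q x ∩ atomsWith Q y := Finset.mem_inter.mpr
            ⟨Finset.mem_filter.mpr ⟨hCyb, hxv⟩, Finset.mem_filter.mpr ⟨hCyb, hyv⟩⟩
          rw [hc] at hmm
          exact Finset.notMem_empty _ hmm
      | @head Ca Cb hadj hrtg ih =>
        intro hmemCa x hxv hxB
        obtain ⟨hCab, hCbb, hpeq, q, hq1, hq2, hqGE⟩ := hAdj_elim hadj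
        have hpca : part Ca = part C₀ := (hblk_mem.mp hmemCa).2.1
        rw [hpca] at hqGE
        have hCbmem : Cb ∈ blk C₀ := by
          refine hblk_mem.mpr ⟨hCbb, ?_, ((hblk_mem.mp hmemCa).2.2).tail hadj⟩
          rw [← hpeq]; exact hpca
        have hqloc : ∀ C₃ ∈ Q.body, q ∈ C₃.vars → C₃ ∈ blk C₀ := by
          intro C₃ hC₃ hqC₃
          by_contra hno
          have hqBr : q ∈ Br C₀ := hBr_mem.mpr ⟨mem_varsOf.mpr ⟨Ca, hmemCa, hq1⟩,
            Or.inr (mem_varsOf.mpr ⟨C₃, Finset.mem_sdiff.mpr ⟨hC₃, hno⟩, hqC₃⟩)⟩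
          obtain ⟨_, _, _, hGE⟩ := hBrGE C₀ hC₀ q hqBr
          exact hqGE hGE
        rcases hH x q with hc | hc | hc
        · left
          intro C₅ hC₅
          obtain ⟨hC₅b, hxBr₅⟩ := hbblk_mem.mp hC₅
          obtain ⟨C₆, hC₆, hxC₆⟩ := mem_varsOf.mp (hBr_mem.mp hxBr₅).1
          have hC₆b : C₆ ∈ Q.body := hblk_sub C₅ hC₆
          have hqC₆ : q ∈ C₆.vars :=
            (Finset.mem_filter.mp (hc (Finset.mem_filter.mpr ⟨hC₆b, hxC₆⟩))).2
          have hC₆blk₀ : C₆ ∈ blk C₀ := hqloc C₆ hC₆b hqC₆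
          have e1 : blk C₆ = blk C₅ := hblk_eq C₅ C₆ hC₆
          have e2 : blk C₆ = blk C₀ := hblk_eq C₀ C₆ hC₆blk₀
          have hBr₅₀ : Br C₅ = Br C₀ := by
            apply hBr_blk
            rw [← e1, e2]
          refine hbblk_mem.mpr ⟨hC₅b, ?_⟩
          rw [hBr₅₀]; exact hy
        · have hxCb : x ∈ Cb.vars :=
            (Finset.mem_filter.mp (hc (Finset.mem_filter.mpr ⟨hCbb, hq2⟩))).2
          exact ih hCbmem x hxCb hxB
        · exfalso
          have hmm : Ca ∈ atomsWith Q x ∩ atomsWith Q q := Finset.mem_inter.mpr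
            ⟨Finset.mem_filter.mpr ⟨hCab, hxv⟩, Finset.mem_filter.mpr ⟨hCab, hq1⟩⟩
          rw [hc] at hmm
          exact Finset.notMem_empty _ hmm
    intro x y
    by_cases hint : atomsWith Q2 x ∩ atomsWith Q2 y = ∅
    · exact Or.inr (Or.inr hint)
    · obtain ⟨g, hg⟩ := Finset.nonempty_iff_ne_empty.mpr hint
      obtain ⟨hgx, hgy⟩ := Finset.mem_inter.mp hg
      by_cases hxW : x ∈ W
      · by_cases hyW : y ∈ W
        · obtain ⟨hgb, hxg⟩ := hatoms_mem.mp hgx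
          have hyg : y ∈ g.vars := (hatoms_mem.mp hgy).2
          rw [hQ2body] at hgb
          obtain ⟨Cg, hCg, rfl⟩ := Finset.mem_image.mp hgb
          have hxBr : x ∈ Br Cg := ((hVC Cg x hxg).resolve_right (fun h => h.1 hxW)).1
          have hyBr : y ∈ Br Cg := ((hVC Cg y hyg).resolve_right (fun h => h.1 hyW)).1
          obtain ⟨Cx, hCx, hxCx⟩ := mem_varsOf.mp (hBr_mem.mp hxBr).1
          obtain ⟨Cy, hCy, hyCy⟩ := mem_varsOf.mp (hBr_mem.mp hyBr).1
          have hpath : Relation.ReflTransGen Adj Cx Cy :=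
            Relation.ReflTransGen.trans (hRTGsymm (hblk_mem.mp hCx).2.2)
              (hblk_mem.mp hCy).2.2
          rcases hL Cg hCg y hyBr Cy hCy hyCy Cx hpath hCx x hxCx hxBr with h | h
          · exact Or.inl (htrans x y hxW h)
          · exact Or.inr (Or.inl (htrans y x hyW h))
        · refine Or.inr (Or.inl ?_)
          intro g' hg'
          have he : g' = g := hfreshcase y hyW g' g hg' hgy
          rw [he]; exact hgx
      · refine Or.inl ?_
        intro g' hg'
        have he : g' = g := hfreshcase x hxW g' g hg' hgx
        rw [he]; exact hgy
  exact ⟨Q2, ⟨hG1, fun D _ _ => hG2 D⟩, hG3⟩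

end Statement8Aux

/-- Every hierarchical CQ that has some 𝒱-rewriting also has a
hierarchical 𝒱-rewriting. -/
theorem statement8 (σ : Schema) (𝒱 : Finset CQ) (h𝒱 : isViewSet σ 𝒱)
    (Q : CQ) (hQ : isCQ σ Q) (hH : isHierarchical Q)
    (hfresh : ∀ V ∈ 𝒱, Q.head.rel ≠ V.head.rel)
    (hrw : ∃ Q', isRewriting σ 𝒱 Q Q') :
    ∃ Q', isRewriting σ 𝒱 Q Q' ∧ isHierarchical Q' := by
  classical
  obtain ⟨Q', hQ'⟩ := hrw
  -- minimize Q
  set S : Set ℕ := {n | ∃ η : ℕ → ℕ, (∀ C ∈ Q.body, mapAtom η C ∈ Q.body) ∧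
    (∀ x ∈ Q.head.vars, η x = x) ∧ (Q.body.image (mapAtom η)).card = n} with hS
  have hSne : S.Nonempty := by
    refine ⟨(Q.body.image (mapAtom id)).card, id, ?_, fun x _ => rfl, rfl⟩
    intro C hC; simpa [mapAtom_id] using hC
  obtain ⟨η₀, hη₀b, hη₀H, hη₀card⟩ := Nat.sInf_mem hSne
  set Q1 : CQ := ⟨Q.head, Q.body.image (mapAtom η₀)⟩ with hQ1def
  have hsub : Q1.body ⊆ Q.body := Finset.image_subset_iff.mpr hη₀b
  have hheadfix : mapAtom η₀ Q.head = Q.head := by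
    have := mapAtom_congr (g := id) hη₀H
    simpa [mapAtom_id] using this
  have heval : ∀ D : Database, evalCQ Q D = evalCQ Q1 D := by
    intro D
    ext f; constructor
    · rintro ⟨ν, hb, hh⟩
      exact ⟨ν, fun A hA => hb A (hsub hA), hh⟩
    · rintro ⟨ν, hb, hh⟩
      refine ⟨ν ∘ η₀, fun C hC => ?_, ?_⟩
      · rw [← mapAtom_comp]
        exact hb _ (Finset.mem_image_of_mem _ hC)
      · show mapAtom (ν ∘ η₀) Q.head = f
        rw [← mapAtom_comp, hheadfix]; exact hh
  have hrw1 : isRewriting σ 𝒱 Q1 Q' :=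
    ⟨hQ'.1, fun D hf ho => (hQ'.2 D hf ho).trans (heval D)⟩
  have hQ1CQ : isCQ σ Q1 := by
    refine ⟨hQ.1.image _, fun A hA => hQ.2.1 A (hsub hA), hQ.2.2.1, ?_⟩
    intro x hx
    obtain ⟨C, hC, hxC⟩ := mem_varsOf.mp (hQ.2.2.2 hx)
    refine mem_varsOf.mpr ⟨mapAtom η₀ C, Finset.mem_image_of_mem _ hC, ?_⟩
    exact mem_vars_mapAtom.mpr ⟨x, hxC, hη₀H x hx⟩
  have hatoms1 : ∀ z, atomsWith Q1 z = atomsWith Q z ∩ Q1.body := by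
    intro z; ext A
    simp only [atomsWith, Finset.mem_filter, Finset.mem_inter]
    exact ⟨fun h => ⟨⟨hsub h.1, h.2⟩, h.1⟩, fun h => ⟨h.2, h.1.2⟩⟩
  have hH1 : isHierarchical Q1 := by
    intro x y
    rcases hH x y with h | h | h
    · refine Or.inl ?_
      rw [hatoms1, hatoms1]
      exact Finset.inter_subset_inter h (le_refl _)
    · refine Or.inr (Or.inl ?_)
      rw [hatoms1, hatoms1]
      exact Finset.inter_subset_inter h (le_refl _)
    · refine Or.inr (Or.inr ?_)
      rw [hatoms1, hatoms1]
      apply Finset.eq_empty_of_forall_notMem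
      intro A hA
      simp only [Finset.mem_inter] at hA
      have : A ∈ atomsWith Q x ∩ atomsWith Q y := Finset.mem_inter.mpr ⟨hA.1.1, hA.2.1⟩
      rw [h] at this; exact absurd this (Finset.notMem_empty A)
  have hmin1 : ∀ η : ℕ → ℕ, (∀ C ∈ Q1.body, mapAtom η C ∈ Q1.body) →
      (∀ x ∈ Q1.head.vars, η x = x) → Set.InjOn η ↑(varsOf Q1.body) := by
    intro η hb hHfix
    have hcompb : ∀ C ∈ Q.body, mapAtom (η ∘ η₀) C ∈ Q.body := by
      intro C hC
      rw [← mapAtom_comp]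
      exact hsub (hb _ (Finset.mem_image_of_mem _ hC))
    have hcompH : ∀ x ∈ Q.head.vars, (η ∘ η₀) x = x := by
      intro x hx; show η (η₀ x) = x
      rw [hη₀H x hx]; exact hHfix x hx
    have himeq : Q.body.image (mapAtom (η ∘ η₀)) = Q1.body.image (mapAtom η) := by
      show _ = (Q.body.image (mapAtom η₀)).image (mapAtom η)
      rw [Finset.image_image]
      exact Finset.image_congr (fun C _ => (mapAtom_comp η η₀ C).symm)
    have hle : Q1.body.card ≤ (Q1.body.image (mapAtom η)).card := by
      have hmem : (Q.body.image (mapAtom (η ∘ η₀))).card ∈ S := ⟨η ∘ η₀, hcompb, hcompH, rfl⟩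
      have := Nat.sInf_le hmem
      rw [himeq] at this
      calc Q1.body.card = sInf S := by rw [hQ1def]; exact hη₀card
        _ ≤ _ := this
    have himsub : Q1.body.image (mapAtom η) ⊆ Q1.body := Finset.image_subset_iff.mpr hb
    have himeq2 : Q1.body.image (mapAtom η) = Q1.body :=
      Finset.eq_of_subset_of_card_le himsub hle
    set T := varsOf Q1.body with hT
    have hTsub : T ⊆ T.image η := by
      intro y hy
      obtain ⟨C, hC, hyC⟩ := mem_varsOf.mp hy
      rw [← himeq2] at hC
      obtain ⟨C₀, hC₀, hC₀eq⟩ := Finset.mem_image.mp hC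
      rw [← hC₀eq] at hyC
      obtain ⟨v, hv, hveq⟩ := mem_vars_mapAtom.mp hyC
      exact Finset.mem_image.mpr ⟨v, mem_varsOf.mpr ⟨C₀, hC₀, hv⟩, hveq⟩
    have hTeq : T = T.image η := Finset.eq_of_subset_of_card_le hTsub (Finset.card_image_le)
    have : (T.image η).card = T.card := by rw [← hTeq]
    exact Finset.card_image_iff.mp this
  obtain ⟨Q2, h2, h3⟩ := key_min σ 𝒱 h𝒱 Q1 hQ1CQ hH1 hfresh hmin1 Q' hrw1
  refine ⟨Q2, ⟨h2.1, fun D hf ho => (h2.2 D hf ho).trans (heval D).symm⟩, h3⟩
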